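/- Let n ≥ 2 and let K be the Cauchy–Szegő kernel on the quaternionic Heisenberg group 𝓗^{n−1}, viewed as a function on ℝ³ × ℝ^{4(n−1)}. Then there exists a constant C > 0 (depending only on n) such that for every l = 0,…,n−2, every j = 1,…,4, and every g = (t,y) ≠ 0, |Y_{4l+j}K(g)| ≤ C·(|y|⁴ + |t|²)^{−(Q+1)/4}, i.e. |Y_{4l+j}K(g)| ≤ C·ρ(g,0)^{−(Q+1)}, where Q = 4n+2. -/

import Mathlib

/-!
`K` is homogeneous of degree `-Q` under the dilations `δ_r(t, y) = (r²t, ry)`: `δ_r` multiplies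
`σ = |y|² + t₁𝐢 + t₂𝐣 + t₃𝐤` by `r²`, and `s(σ)` is the `(2n−2)`-nd derivative in the real
direction of `σ ↦ conj σ · |σ|⁻⁴`, which is smooth away from `0` and homogeneous of degree `-3`,
so `s` is homogeneous of degree `-(2n+1)`. The field `Y_{4l+j}` satisfies
`Y(δ_r g) = r⁻¹ δ_r(Y g)`, so `Y_{4l+j}K` is homogeneous of degree `-(Q+1)`. Being continuous
on the compact sphere `|y|⁴ + |t|² = 1`, it is bounded there, and rescaling an arbitrary
`g ≠ 0` to that sphere gives the estimate.
-/

noncomputable section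

/-- The quaternionic Heisenberg group `𝓗^{n−1}` identified with
`ℝ³ × ℝ^{4(n−1)}`, with coordinates `(t₁,t₂,t₃, y₁,…,y_{4n−4})`. -/
abbrev G (n : ℕ) := (Fin 3 → ℝ) × (Fin (4 * (n - 1)) → ℝ)

/-- The matrices `b¹, b², b³` from the multiplication law of the quaternionic
Heisenberg group. -/
def bmat : Fin 3 → Matrix (Fin 4) (Fin 4) ℝ :=
  ![!![0, 1, 0, 0; -1, 0, 0, 0; 0, 0, 0, -1; 0, 0, 1, 0],
    !![0, 0, 1, 0; 0, 0, 0, 1; -1, 0, 0, 0; 0, -1, 0, 0],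
    !![0, 0, 0, 1; 0, 0, -1, 0; 0, 1, 0, 0; -1, 0, 0, 0]]

/-- The index `4l + j` (0-based: `l = 0,…,n−2`, `j = 0,…,3` corresponds to the
coordinate `y_{4l+j+1}`). -/
def yidx (n : ℕ) (l : Fin (n - 1)) (j : Fin 4) : Fin (4 * (n - 1)) :=
  ⟨4 * (l : ℕ) + (j : ℕ), by have := l.isLt; have := j.isLt; omega⟩

/-- The left-invariant vector field
`Y_{4l+j}f = ∂f/∂y_{4l+j} + 2 Σ_{α=1}^3 Σ_{k=1}^4 b^α_{kj}·y_{4l+k}·∂f/∂t_α`. -/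
def Yf {n : ℕ} {E : Type*} [NormedAddCommGroup E] [NormedSpace ℝ E]
    (l : Fin (n - 1)) (j : Fin 4) (f : G n → E) (g : G n) : E :=
  fderiv ℝ f g (0, Pi.single (yidx n l j) 1)
    + (2 : ℝ) • ∑ α : Fin 3, ∑ k : Fin 4,
        (bmat α k j * g.2 (yidx n l k)) • fderiv ℝ f g (Pi.single α 1, 0)

/-- The group product of `𝓗^{n−1}` in real coordinates:
`(t,y)·(t',y') = (t_α + t'_α + 2Σ_{l,j,k} b^α_{kj} y_{4l+k} y'_{4l+j}, y + y')`. -/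
def qmulC (n : ℕ) (g h : G n) : G n :=
  (fun α => g.1 α + h.1 α + 2 * ∑ l : Fin (n - 1), ∑ j : Fin 4, ∑ k : Fin 4,
      bmat α k j * g.2 (yidx n l k) * h.2 (yidx n l j),
   g.2 + h.2)

/-- The group inverse `(t,y)⁻¹ = (−t,−y)` in coordinates. -/
def qinvC (n : ℕ) (g : G n) : G n := (-g.1, -g.2)

/-- The homogeneous norm `‖(t,y)‖ = (|y|⁴ + |t|²)^{1/4}` in coordinates. -/
def hnormC (n : ℕ) (g : G n) : ℝ :=
  ((∑ i, g.2 i ^ 2) ^ 2 + ∑ α, g.1 α ^ 2) ^ ((1 : ℝ) / 4)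

/-- The quasi-distance `ρ(h,g) = ‖g⁻¹·h‖` in coordinates. -/
def qdistC (n : ℕ) (h g : G n) : ℝ := hnormC n (qmulC n (qinvC n g) h)

open Quaternion

/-- The normalized Cauchy–Szegő kernel density: `s(σ)` is the `(2n−2)`-nd
derivative at `x = Re σ` of `x ↦ conj(x + Im σ)·(x² + |Im σ|²)^{−2}`. -/
def sker (n : ℕ) (σ : ℍ[ℝ]) : ℍ[ℝ] :=
  iteratedDeriv (2 * n - 2)
    (fun x : ℝ => ((x ^ 2 + ‖σ.im‖ ^ 2) ^ 2)⁻¹ • star ((x : ℍ[ℝ]) + σ.im)) σ.re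

/-- The Cauchy–Szegő kernel in real coordinates:
`K(t,y) = s(|y|² + t₁𝐢 + t₂𝐣 + t₃𝐤)`. -/
def KkerC (n : ℕ) (g : G n) : ℍ[ℝ] :=
  sker n ⟨∑ i, g.2 i ^ 2, g.1 0, g.1 1, g.1 2⟩

open Filter Topology

section DirectionalDerivative

variable {E F : Type*} [NormedAddCommGroup E] [NormedSpace ℝ E]
  [NormedAddCommGroup F] [NormedSpace ℝ F]

theorem fderiv_comp_clm_of_eventuallyEq_smul {f : E → F} {L : E →L[ℝ] E} {a : ℝ} {p : E}
    (hfL : DifferentiableAt ℝ f (L p)) (hf : DifferentiableAt ℝ f p)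
    (h : f ∘ L =ᶠ[𝓝 p] a • f) :
    (fderiv ℝ f (L p)).comp L = a • fderiv ℝ f p := by
  rw [← (hfL.hasFDerivAt.comp p L.hasFDerivAt).fderiv,
    ← (hf.hasFDerivAt.const_smul a).fderiv]
  exact h.fderiv_eq

def iterDirDeriv (f : E → F) (v : E) : ℕ → E → F
  | 0 => f
  | k + 1 => fun p => fderiv ℝ (iterDirDeriv f v k) p v

variable {f : E → F} {U : Set E}

theorem contDiffOn_iterDirDeriv (hU : IsOpen U) (hf : ContDiffOn ℝ ⊤ f U) (v : E) (k : ℕ) :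
    ContDiffOn ℝ ⊤ (iterDirDeriv f v k) U := by
  induction k with
  | zero => exact hf
  | succ k ih => exact (ih.fderiv_of_isOpen hU (by simp)).clm_apply contDiffOn_const

theorem differentiableAt_iterDirDeriv (hU : IsOpen U) (hf : ContDiffOn ℝ ⊤ f U) (v : E)
    (k : ℕ) {p : E} (hp : p ∈ U) : DifferentiableAt ℝ (iterDirDeriv f v k) p :=
  ((contDiffOn_iterDirDeriv hU hf v k).differentiableOn (by simp)).differentiableAt
    (hU.mem_nhds hp)

theorem iteratedDeriv_comp_smul_add (hU : IsOpen U) (hf : ContDiffOn ℝ ⊤ f U) (v w : E) (k : ℕ)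
    {x : ℝ} (hx : x • v + w ∈ U) :
    iteratedDeriv k (fun x : ℝ => f (x • v + w)) x = iterDirDeriv f v k (x • v + w) := by
  induction k generalizing x with
  | zero => rfl
  | succ k ih =>
    have hline : IsOpen {y : ℝ | y • v + w ∈ U} := hU.preimage (by fun_prop)
    rw [iteratedDeriv_succ,
      (eventuallyEq_of_mem (hline.mem_nhds hx) fun y hy => ih hy).deriv_eq]
    have hd := (differentiableAt_iterDirDeriv hU hf v k hx).hasFDerivAt.comp_hasDerivAt x
      (((hasDerivAt_id x).smul_const v).add_const w)
    rw [one_smul] at hd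
    exact hd.deriv

theorem iterDirDeriv_smul (hU : IsOpen U) (hf : ContDiffOn ℝ ⊤ f U)
    (hUc : ∀ c : ℝ, 0 < c → ∀ p ∈ U, c • p ∈ U) {m : ℕ}
    (hfc : ∀ c : ℝ, 0 < c → ∀ p ∈ U, f (c • p) = (c ^ m)⁻¹ • f p) (v : E) (k : ℕ)
    {c : ℝ} (hc : 0 < c) {p : E} (hp : p ∈ U) :
    iterDirDeriv f v k (c • p) = (c ^ (m + k))⁻¹ • iterDirDeriv f v k p := by
  induction k generalizing p with
  | zero => exact hfc c hc p hp
  | succ k ih =>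
    have hL := congrArg (· v) <| fderiv_comp_clm_of_eventuallyEq_smul
      (L := c • ContinuousLinearMap.id ℝ E)
      (differentiableAt_iterDirDeriv hU hf v k (hUc c hc p hp))
      (differentiableAt_iterDirDeriv hU hf v k hp)
      (eventuallyEq_of_mem (hU.mem_nhds hp) fun q hq => ih hq)
    simp only [ContinuousLinearMap.comp_apply, smul_apply, ContinuousLinearMap.id_apply,
      map_smul] at hL
    change fderiv ℝ (iterDirDeriv f v k) (c • p) v = _
    rw [← inv_smul_smul₀ hc.ne' (fderiv ℝ _ (c • p) v), hL, smul_smul, ← mul_inv, ← pow_succ',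
      add_assoc]
    rfl

end DirectionalDerivative

theorem Quaternion.contDiff_star : ContDiff ℝ ⊤ (star : ℍ[ℝ] → ℍ[ℝ]) :=
  (LinearMap.toContinuousLinearMap
    { toFun := star, map_add' := star_add, map_smul' := Quaternion.star_smul }).contDiff

theorem Quaternion.norm_coe_add_im_sq (x : ℝ) (q : ℍ[ℝ]) :
    ‖(x : ℍ[ℝ]) + q.im‖ ^ 2 = x ^ 2 + ‖q.im‖ ^ 2 := by
  simp [sq, ← Quaternion.normSq_eq_norm_mul_self, Quaternion.normSq_def', add_assoc]

def szegoProfile (σ : ℍ[ℝ]) : ℍ[ℝ] := ((‖σ‖ ^ 2) ^ 2)⁻¹ • star σ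

theorem contDiffOn_szegoProfile : ContDiffOn ℝ ⊤ szegoProfile {0}ᶜ :=
  ((((contDiff_norm_sq ℝ).pow 2).contDiffOn).inv fun _ hσ => by simpa using hσ).smul
    Quaternion.contDiff_star.contDiffOn

theorem szegoProfile_smul (c : ℝ) (σ : ℍ[ℝ]) :
    szegoProfile (c • σ) = (c ^ 3)⁻¹ • szegoProfile σ := by
  simp only [szegoProfile, norm_smul, Quaternion.star_smul, smul_smul, Real.norm_eq_abs, mul_pow,
    sq_abs]
  congr 1
  rcases eq_or_ne σ 0 with rfl | hσ
  · simp
  · field_simp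

theorem sker_eq_iterDirDeriv (n : ℕ) {σ : ℍ[ℝ]} (hσ : σ ≠ 0) :
    sker n σ = iterDirDeriv szegoProfile 1 (2 * n - 2) σ := by
  have hline : (fun x : ℝ => ((x ^ 2 + ‖σ.im‖ ^ 2) ^ 2)⁻¹ • star ((x : ℍ[ℝ]) + σ.im))
      = fun x : ℝ => szegoProfile (x • 1 + σ.im) := by
    funext x
    rw [szegoProfile, ← Algebra.algebraMap_eq_smul_one, Quaternion.algebraMap_def,
      Quaternion.norm_coe_add_im_sq]
  have hσ' : σ.re • 1 + σ.im = σ := by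
    rw [← Algebra.algebraMap_eq_smul_one, Quaternion.algebraMap_def, Quaternion.re_add_im]
  rw [sker, hline, iteratedDeriv_comp_smul_add isOpen_compl_singleton contDiffOn_szegoProfile, hσ']
  rwa [hσ']

section Heisenberg

variable {n : ℕ}

def dil (n : ℕ) (r : ℝ) : G n →L[ℝ] G n :=
  (r ^ 2 • ContinuousLinearMap.fst ℝ _ _).prod (r • ContinuousLinearMap.snd ℝ _ _)

theorem dil_apply (r : ℝ) (g : G n) : dil n r g = (r ^ 2 • g.1, r • g.2) := rfl

theorem dil_mul (r s : ℝ) (g : G n) : dil n (r * s) g = dil n r (dil n s g) := by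
  simp only [dil_apply, mul_pow, mul_smul]

theorem dil_inv_dil {r : ℝ} (hr : r ≠ 0) (g : G n) : dil n r⁻¹ (dil n r g) = g := by
  rw [← dil_mul, inv_mul_cancel₀ hr, dil_apply, one_pow, one_smul, one_smul]

theorem dil_ne_zero {r : ℝ} (hr : r ≠ 0) {g : G n} (hg : g ≠ 0) : dil n r g ≠ 0 := by
  contrapose! hg
  rw [← dil_inv_dil hr g, hg, map_zero]

def sigmaC (g : G n) : ℍ[ℝ] := ⟨∑ i, g.2 i ^ 2, g.1 0, g.1 1, g.1 2⟩

theorem sigmaC_ne_zero {g : G n} (hg : g ≠ 0) : sigmaC g ≠ 0 := by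
  contrapose! hg
  ext i
  · fin_cases i
    exacts [congrArg (·.imI) hg, congrArg (·.imJ) hg, congrArg (·.imK) hg]
  · have hy : ∑ i, g.2 i ^ 2 = 0 := congrArg (·.re) hg
    simpa using (Finset.sum_eq_zero_iff_of_nonneg fun i _ => sq_nonneg (g.2 i)).mp hy i
      (Finset.mem_univ i)

theorem sigmaC_dil (r : ℝ) (g : G n) : sigmaC (dil n r g) = r ^ 2 • sigmaC g := by
  ext <;>
    simp only [Quaternion.re_smul, Quaternion.imI_smul, Quaternion.imJ_smul,
      Quaternion.imK_smul] <;>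
    simp [sigmaC, dil_apply, mul_pow, Finset.mul_sum]

theorem contDiff_sigmaC : ContDiff ℝ ⊤ (sigmaC (n := n)) := by
  let e : ℍ[ℝ] ≃L[ℝ] (Fin 4 → ℝ) :=
    LinearEquiv.toContinuousLinearEquiv (QuaternionAlgebra.linearEquivTuple (-1 : ℝ) 0 (-1))
  have hcoords : ContDiff ℝ ⊤ fun g : G n => ![∑ i, g.2 i ^ 2, g.1 0, g.1 1, g.1 2] := by
    refine contDiff_pi.2 fun i => ?_
    fin_cases i <;>
      simp only [Fin.zero_eta, Fin.mk_one, Fin.reduceFinMk, Matrix.cons_val_zero,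
        Matrix.cons_val_one, Matrix.cons_val] <;>
      fun_prop
  exact e.symm.contDiff.comp hcoords

theorem KkerC_eq_iterDirDeriv {g : G n} (hg : g ≠ 0) :
    KkerC n g = iterDirDeriv szegoProfile 1 (2 * n - 2) (sigmaC g) :=
  sker_eq_iterDirDeriv n (sigmaC_ne_zero hg)

theorem contDiffOn_KkerC : ContDiffOn ℝ ⊤ (KkerC n) {0}ᶜ :=
  ((contDiffOn_iterDirDeriv isOpen_compl_singleton contDiffOn_szegoProfile 1 _).comp
    contDiff_sigmaC.contDiffOn fun _ hg => sigmaC_ne_zero hg).congr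
    fun _ hg => KkerC_eq_iterDirDeriv hg

theorem differentiableAt_KkerC {g : G n} (hg : g ≠ 0) : DifferentiableAt ℝ (KkerC n) g :=
  (contDiffOn_KkerC.differentiableOn (by simp)).differentiableAt
    (isOpen_compl_singleton.mem_nhds hg)

theorem KkerC_dil {r : ℝ} (hr : 0 < r) {g : G n} (hg : g ≠ 0) :
    KkerC n (dil n r g) = (r ^ (2 * (3 + (2 * n - 2))))⁻¹ • KkerC n g := by
  rw [KkerC_eq_iterDirDeriv (dil_ne_zero hr.ne' hg), KkerC_eq_iterDirDeriv hg, sigmaC_dil,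
    iterDirDeriv_smul isOpen_compl_singleton contDiffOn_szegoProfile
      (fun c hc σ hσ => smul_ne_zero hc.ne' hσ) (fun c _ σ _ => szegoProfile_smul c σ) 1 _
      (by positivity) (sigmaC_ne_zero hg), pow_mul]

theorem fderiv_KkerC_dil {r : ℝ} (hr : 0 < r) {g : G n} (hg : g ≠ 0) :
    (fderiv ℝ (KkerC n) (dil n r g)).comp (dil n r)
      = (r ^ (2 * (3 + (2 * n - 2))))⁻¹ • fderiv ℝ (KkerC n) g :=
  fderiv_comp_clm_of_eventuallyEq_smul (differentiableAt_KkerC (dil_ne_zero hr.ne' hg))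
    (differentiableAt_KkerC hg)
    (eventuallyEq_of_mem (isOpen_compl_singleton.mem_nhds hg) fun _ hg' => KkerC_dil hr hg')

def Yvec (l : Fin (n - 1)) (j : Fin 4) (g : G n) : G n :=
  (0, Pi.single (yidx n l j) 1)
    + (2 : ℝ) • ∑ α : Fin 3, ∑ k : Fin 4, (bmat α k j * g.2 (yidx n l k)) • (Pi.single α 1, 0)

theorem Yf_eq_fderiv_apply {E : Type*} [NormedAddCommGroup E] [NormedSpace ℝ E]
    (l : Fin (n - 1)) (j : Fin 4) (f : G n → E) (g : G n) :
    Yf l j f g = fderiv ℝ f g (Yvec l j g) := by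
  simp only [Yf, Yvec, map_add, map_smul, map_sum]

theorem Yvec_dil (l : Fin (n - 1)) (j : Fin 4) {r : ℝ} (hr : r ≠ 0) (g : G n) :
    Yvec l j (dil n r g) = r⁻¹ • dil n r (Yvec l j g) := by
  ext i <;> simp only [Yvec, dil_apply, Pi.smul_apply, smul_eq_mul, Prod.smul_mk, smul_zero,
    Prod.fst_add, Prod.snd_add, Prod.smul_fst, Prod.smul_snd, Prod.fst_sum, Prod.snd_sum,
    Pi.add_apply, Pi.zero_apply, Finset.sum_apply, Pi.single_apply, mul_ite, mul_one, mul_zero,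
    Finset.sum_ite_irrel, Finset.sum_const_zero, Finset.sum_ite_eq, Finset.mem_univ, ↓reduceIte,
    Finset.mul_sum, zero_add, add_zero, inv_smul_smul₀ hr]
  refine Finset.sum_congr rfl fun k _ => ?_
  field_simp

theorem Yf_KkerC_dil (l : Fin (n - 1)) (j : Fin 4) {r : ℝ} (hr : 0 < r) {g : G n} (hg : g ≠ 0) :
    Yf l j (KkerC n) (dil n r g) = (r ^ (2 * (3 + (2 * n - 2)) + 1))⁻¹ • Yf l j (KkerC n) g := by
  rw [Yf_eq_fderiv_apply, Yf_eq_fderiv_apply, Yvec_dil l j hr.ne', map_smul,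
    ← ContinuousLinearMap.comp_apply, fderiv_KkerC_dil hr hg, smul_apply, smul_smul, pow_succ,
    mul_inv, mul_comm]

theorem continuousOn_Yf_KkerC (l : Fin (n - 1)) (j : Fin 4) :
    ContinuousOn (Yf l j (KkerC n)) {0}ᶜ := by
  have hfderiv := (contDiffOn_KkerC (n := n)).continuousOn_fderiv_of_isOpen
    isOpen_compl_singleton (by simp)
  have hYvec : Continuous (Yvec (n := n) l j) := by
    unfold Yvec; fun_prop
  exact (hfderiv.clm_apply hYvec.continuousOn).congr fun g _ => Yf_eq_fderiv_apply l j _ g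

end Heisenberg

section HomogeneousBound

variable {n : ℕ}

theorem norm_sigmaC_sq (g : G n) :
    ‖sigmaC g‖ ^ 2 = (∑ i, g.2 i ^ 2) ^ 2 + ∑ α, g.1 α ^ 2 := by
  rw [sq ‖_‖, ← Quaternion.normSq_eq_norm_mul_self, Quaternion.normSq_def', Fin.sum_univ_three]
  simp only [sigmaC]
  ring

theorem hnormC_eq_sqrt_norm_sigmaC (g : G n) : hnormC n g = √‖sigmaC g‖ := by
  rw [hnormC, ← norm_sigmaC_sq, Real.sqrt_eq_rpow, ← Real.rpow_natCast,
    ← Real.rpow_mul (norm_nonneg _)]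
  norm_num

theorem continuous_hnormC : Continuous (hnormC n) := by
  simp only [funext hnormC_eq_sqrt_norm_sigmaC]
  exact contDiff_sigmaC.continuous.norm.sqrt

theorem hnormC_pos {g : G n} (hg : g ≠ 0) : 0 < hnormC n g := by
  rw [hnormC_eq_sqrt_norm_sigmaC]
  exact Real.sqrt_pos.2 (norm_pos_iff.2 (sigmaC_ne_zero hg))

theorem hnormC_dil {r : ℝ} (hr : 0 ≤ r) (g : G n) : hnormC n (dil n r g) = r * hnormC n g := by
  rw [hnormC_eq_sqrt_norm_sigmaC, hnormC_eq_sqrt_norm_sigmaC, sigmaC_dil, norm_smul, norm_pow,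
    Real.norm_eq_abs, sq_abs, Real.sqrt_mul (sq_nonneg r), Real.sqrt_sq hr]

theorem norm_le_one_of_hnormC_eq_one {g : G n} (hg : hnormC n g = 1) : ‖g‖ ≤ 1 := by
  have hA : (∑ i, g.2 i ^ 2) ^ 2 + ∑ α, g.1 α ^ 2 = 1 := by
    rw [hnormC_eq_sqrt_norm_sigmaC, Real.sqrt_eq_one] at hg
    rw [← norm_sigmaC_sq, hg, one_pow]
  have hy0 : 0 ≤ ∑ i, g.2 i ^ 2 := by positivity
  have ht0 : 0 ≤ ∑ α, g.1 α ^ 2 := by positivity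
  have ht : ∑ α, g.1 α ^ 2 ≤ 1 := by nlinarith
  have hy : ∑ i, g.2 i ^ 2 ≤ 1 := by nlinarith
  simp only [Prod.norm_def, max_le_iff, pi_norm_le_iff_of_nonneg zero_le_one, Real.norm_eq_abs,
    ← sq_le_one_iff_abs_le_one]
  exact ⟨fun α => (Finset.single_le_sum (fun β _ => sq_nonneg (g.1 β)) (by simp)).trans ht,
    fun i => (Finset.single_le_sum (fun k _ => sq_nonneg (g.2 k)) (by simp)).trans hy⟩

theorem isCompact_hnormC_eq_one : IsCompact {g : G n | hnormC n g = 1} :=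
  Metric.isCompact_of_isClosed_isBounded (isClosed_eq continuous_hnormC continuous_const)
    (Metric.isBounded_closedBall.subset fun _ hg => mem_closedBall_zero_iff.2
      (norm_le_one_of_hnormC_eq_one hg))

theorem exists_norm_le_mul_hnormC_rpow {E : Type*} [NormedAddCommGroup E] [NormedSpace ℝ E]
    {f : G n → E} (hf : ContinuousOn f {0}ᶜ) {m : ℕ}
    (hhom : ∀ r : ℝ, 0 < r → ∀ g : G n, g ≠ 0 → f (dil n r g) = (r ^ m)⁻¹ • f g) :
    ∃ C, 0 < C ∧ ∀ g : G n, g ≠ 0 → ‖f g‖ ≤ C * hnormC n g ^ (-(m : ℝ)) := by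
  obtain ⟨C, hC⟩ := isCompact_hnormC_eq_one.exists_bound_of_continuousOn
    (hf.mono fun g (hg : hnormC n g = 1) (h0 : g = 0) => by simp [h0, hnormC] at hg)
  refine ⟨max C 1, by positivity, fun g hg => ?_⟩
  set r := hnormC n g
  have hr : 0 < r := hnormC_pos hg
  set u := dil n r⁻¹ g
  have hu : hnormC n u = 1 := by rw [hnormC_dil (inv_nonneg.2 hr.le), inv_mul_cancel₀ hr.ne']
  have hgu : f g = (r ^ m)⁻¹ • f u := by
    rw [← hhom r hr u (dil_ne_zero (inv_ne_zero hr.ne') hg)]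
    simpa using congrArg f (dil_inv_dil (inv_ne_zero hr.ne') g).symm
  calc ‖f g‖ = (r ^ m)⁻¹ * ‖f u‖ := by
        rw [hgu, norm_smul, norm_inv, norm_pow, Real.norm_of_nonneg hr.le]
    _ ≤ (r ^ m)⁻¹ * max C 1 := by gcongr; exact (hC u hu).trans (le_max_left _ _)
    _ = max C 1 * r ^ (-(m : ℝ)) := by rw [Real.rpow_neg hr.le, Real.rpow_natCast, mul_comm]

end HomogeneousBound

theorem YKker_size_estimate_general (n : ℕ) :
    ∃ C : ℝ, 0 < C ∧
      ∀ (l : Fin (n - 1)) (j : Fin 4) (g : G n), g ≠ 0 →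
        ‖Yf l j (KkerC n) g‖ ≤
          C * (((∑ i, g.2 i ^ 2) ^ 2 + ∑ α, g.1 α ^ 2)
              ^ (-((4 * (n : ℝ) + 2 + 1) / 4))) := by
  obtain ⟨C, hC, hbound⟩ := exists_norm_le_mul_hnormC_rpow
    (f := fun g l j => Yf l j (KkerC n) g)
    (continuousOn_pi.2 fun l => continuousOn_pi.2 fun j => continuousOn_Yf_KkerC l j)
    (fun r hr g hg => by funext l j; exact Yf_KkerC_dil l j hr hg)
  refine ⟨C, hC, fun l j g hg => ?_⟩
  -- `2 * n - 2` is truncated subtraction; the existence of `l : Fin (n - 1)` gives `n ≥ 2`.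
  have h2n : 2 ≤ 2 * n := by have := l.isLt; omega
  have hexp : hnormC n g ^ (-((2 * (3 + (2 * n - 2)) + 1 : ℕ) : ℝ))
      = ((∑ i, g.2 i ^ 2) ^ 2 + ∑ α, g.1 α ^ 2) ^ (-((4 * (n : ℝ) + 2 + 1) / 4)) := by
    rw [hnormC, ← Real.rpow_mul (by positivity)]
    push_cast [Nat.cast_sub h2n]
    ring_nf
  calc ‖Yf l j (KkerC n) g‖ ≤ ‖fun l j => Yf l j (KkerC n) g‖ :=
        (norm_le_pi_norm (fun j => Yf l j (KkerC n) g) j).trans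
          (norm_le_pi_norm (fun l j => Yf l j (KkerC n) g) l)
    _ ≤ _ := hbound g hg
    _ = _ := by rw [hexp]

/-- Gradient estimate for the Cauchy–Szegő kernel: there is `C > 0` (depending
only on `n`) such that for all `l = 0,…,n−2`, `j = 1,…,4` and `g = (t,y) ≠ 0`,
`|Y_{4l+j}K(g)| ≤ C·(|y|⁴+|t|²)^{−(Q+1)/4} = C·ρ(g,0)^{−(Q+1)}`, `Q = 4n+2`. -/
theorem YKker_size_estimate (n : ℕ) (hn : 2 ≤ n) :
    ∃ C : ℝ, 0 < C ∧
      ∀ (l : Fin (n - 1)) (j : Fin 4) (g : G n), g ≠ 0 →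
        ‖Yf l j (KkerC n) g‖ ≤
          C * (((∑ i, g.2 i ^ 2) ^ 2 + ∑ α, g.1 α ^ 2)
              ^ (-((4 * (n : ℝ) + 2 + 1) / 4))) :=
  YKker_size_estimate_general n
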